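/- Let n = 2, λ = 2, ξ_1 = (1,0), ξ_2 = (0,1), ξ_3 = (1,1), and let τ(ω₁, ω₂) = 1/2 + (e^{iω₁} + e^{−iω₁})/4 + (e^{iω₂} + e^{−iω₂})/4 + (e^{i(ω₁+ω₂)} + e^{−i(ω₁+ω₂)})/4. Define q_{C,μ}(ω) = e^{i ξ_μ·ω} − τ(ω)(1 + e^{2i ξ_μ·ω})/4 for μ = 1, 2, 3, and q_{C,4}(ω) = 1 − τ(ω)/2. Then each of the four complementary wavelet masks q_{C,μ}, 1 ≤ μ ≤ 4, has a zero of order exactly 2 at (0,0); that is, each has exactly two vanishing moments. -/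

import Mathlib

open Complex Real BigOperators

noncomputable section

/-- `q` has a zero of order at least `m` at `x`. -/
def HasZeroOfOrderAtLeast {n : ℕ} (q : (Fin n → ℝ) → ℂ) (m : ℕ) (x : Fin n → ℝ) : Prop :=
  ∀ j, j < m → iteratedFDeriv ℝ j q x = 0

/-- `q` has a zero of order exactly `m` at `x`. -/
def HasZeroOfOrderExactly {n : ℕ} (q : (Fin n → ℝ) → ℂ) (m : ℕ) (x : Fin n → ℝ) : Prop :=
  HasZeroOfOrderAtLeast q m x ∧ iteratedFDeriv ℝ m q x ≠ 0

/-- The mask of the 2-D piecewise linear box spline. -/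
def boxSplineMask : (Fin 2 → ℝ) → ℂ := fun ω =>
  1 / 2 + (Complex.exp (Complex.I * ((ω 0 : ℝ) : ℂ)) + Complex.exp (-Complex.I * ((ω 0 : ℝ) : ℂ))) / 4
    + (Complex.exp (Complex.I * ((ω 1 : ℝ) : ℂ)) + Complex.exp (-Complex.I * ((ω 1 : ℝ) : ℂ))) / 4
    + (Complex.exp (Complex.I * ((ω 0 + ω 1 : ℝ) : ℂ))
        + Complex.exp (-Complex.I * ((ω 0 + ω 1 : ℝ) : ℂ))) / 4

/-- `q_{C,1}(ω) = e^{iω₁} - τ(ω)(1 + e^{2iω₁})/4`, for `ξ₁ = (1,0)`. -/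
def qC1 : (Fin 2 → ℝ) → ℂ := fun ω =>
  Complex.exp (Complex.I * ((ω 0 : ℝ) : ℂ))
    - boxSplineMask ω * (1 + Complex.exp (2 * Complex.I * ((ω 0 : ℝ) : ℂ))) / 4

/-- `q_{C,2}(ω) = e^{iω₂} - τ(ω)(1 + e^{2iω₂})/4`, for `ξ₂ = (0,1)`. -/
def qC2 : (Fin 2 → ℝ) → ℂ := fun ω =>
  Complex.exp (Complex.I * ((ω 1 : ℝ) : ℂ))
    - boxSplineMask ω * (1 + Complex.exp (2 * Complex.I * ((ω 1 : ℝ) : ℂ))) / 4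

/-- `q_{C,3}(ω) = e^{i(ω₁+ω₂)} - τ(ω)(1 + e^{2i(ω₁+ω₂)})/4`, for `ξ₃ = (1,1)`. -/
def qC3 : (Fin 2 → ℝ) → ℂ := fun ω =>
  Complex.exp (Complex.I * ((ω 0 + ω 1 : ℝ) : ℂ))
    - boxSplineMask ω * (1 + Complex.exp (2 * Complex.I * ((ω 0 + ω 1 : ℝ) : ℂ))) / 4

/-- `q_{C,4}(ω) = 1 - τ(ω)/2`. -/
def qC4 : (Fin 2 → ℝ) → ℂ := fun ω => 1 - boxSplineMask ω / 2

/-! ### Auxiliary material for the proof -/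

section Aux

/-- Derivative of `s ↦ exp (k s)` as a function of a real variable. -/
lemma hd_exp (k : ℂ) (t : ℝ) :
    HasDerivAt (fun s : ℝ => Complex.exp (k * (s:ℂ))) (k * Complex.exp (k * (t:ℂ))) t := by
  have h1 : HasDerivAt (fun s : ℝ => (s : ℂ)) 1 t := HasDerivAt.ofReal_comp (hasDerivAt_id t)
  have := (h1.const_mul k).cexp
  convert this using 1
  ring

lemma cd_exp (k : ℂ) {f : (Fin 2 → ℝ) → ℝ} (hf : ContDiff ℝ 2 f) :
    ContDiff ℝ 2 (fun ω => Complex.exp (k * ((f ω : ℝ) : ℂ))) :=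
  Complex.contDiff_exp.comp (contDiff_const.mul (Complex.ofRealCLM.contDiff.comp hf))

lemma cd_proj (i : Fin 2) : ContDiff ℝ 2 (fun ω : Fin 2 → ℝ => ω i) :=
  (ContinuousLinearMap.proj i : (Fin 2 → ℝ) →L[ℝ] ℝ).contDiff

lemma cd_box : ContDiff ℝ 2 boxSplineMask := by
  unfold boxSplineMask
  exact ((((contDiff_const.add (((cd_exp I (cd_proj 0)).add (cd_exp (-I) (cd_proj 0))).div_const 4)).add
    (((cd_exp I (cd_proj 1)).add (cd_exp (-I) (cd_proj 1))).div_const 4)).add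
    ((((cd_exp I ((cd_proj 0).add (cd_proj 1))).add
      (cd_exp (-I) ((cd_proj 0).add (cd_proj 1)))).div_const 4))))

lemma cd_q1 : ContDiff ℝ 2 qC1 := by
  unfold qC1
  exact (cd_exp I (cd_proj 0)).sub
    ((cd_box.mul (contDiff_const.add (cd_exp (2*I) (cd_proj 0)))).div_const 4)

lemma cd_q2 : ContDiff ℝ 2 qC2 := by
  unfold qC2
  exact (cd_exp I (cd_proj 1)).sub
    ((cd_box.mul (contDiff_const.add (cd_exp (2*I) (cd_proj 1)))).div_const 4)

lemma cd_q3 : ContDiff ℝ 2 qC3 := by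
  unfold qC3
  exact (cd_exp I ((cd_proj 0).add (cd_proj 1))).sub
    ((cd_box.mul (contDiff_const.add (cd_exp (2*I) ((cd_proj 0).add (cd_proj 1))))).div_const 4)

lemma cd_q4 : ContDiff ℝ 2 qC4 := by
  unfold qC4
  exact contDiff_const.sub (cd_box.div_const 2)

/-- Directional iterated derivatives via restriction to a line. -/
lemma dirDeriv {q : (Fin 2 → ℝ) → ℂ} (hq : ContDiff ℝ 2 q) (v : Fin 2 → ℝ) {i : ℕ} (hi : i ≤ 2) :
    iteratedDeriv i (fun s : ℝ => q (s • v)) 0 = iteratedFDeriv ℝ i q 0 (fun _ => v) := by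
  have hg : (fun s : ℝ => q (s • v)) = q ∘ ((1 : ℝ →L[ℝ] ℝ).smulRight v) := by
    funext s; simp
  rw [iteratedDeriv_eq_iteratedFDeriv, hg,
    ContinuousLinearMap.iteratedFDeriv_comp_right _ hq _ (by exact_mod_cast hi)]
  simp

/-! The two scalar functions obtained by restricting the masks to the coordinate axes. -/

def fa : ℝ → ℂ := fun s => Complex.exp (Complex.I * (s:ℂ))
def fb : ℝ → ℂ := fun s => Complex.exp (-Complex.I * (s:ℂ))
def fe : ℝ → ℂ := fun s => Complex.exp (2 * Complex.I * (s:ℂ))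
def fT : ℝ → ℂ := fun s => 1 + (fa s + fb s) / 2
def fA : ℝ → ℂ := fun s => fa s - fT s * (1 + fe s) / 4
def fB : ℝ → ℂ := fun s => 1 - fT s / 2
def fA' : ℝ → ℂ := fun s =>
  I * fa s - ((I * fa s + -I * fb s) / 2 * (1 + fe s) + fT s * (2 * I * fe s)) / 4
def fB' : ℝ → ℂ := fun s => -((I * fa s + -I * fb s) / 2 / 2)

lemma hdT (s : ℝ) : HasDerivAt fT ((I * fa s + -I * fb s) / 2) s := by
  unfold fT fa fb
  exact (((hd_exp I s).add (hd_exp (-I) s)).div_const 2).const_add 1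

lemma hdA (s : ℝ) : HasDerivAt fA (fA' s) s := by
  unfold fA fA'
  exact (hd_exp I s).sub (((hdT s).mul ((hd_exp (2*I) s).const_add 1)).div_const 4)

lemma hdB (s : ℝ) : HasDerivAt fB (fB' s) s := by
  unfold fB fB'
  exact ((hdT s).div_const 2).const_sub 1

lemma derivA : deriv fA = fA' := funext fun s => (hdA s).deriv
lemma derivB : deriv fB = fB' := funext fun s => (hdB s).deriv

lemma derivA0 : deriv fA 0 = 0 := by
  rw [derivA]; simp [fA', fa, fb, fe, fT]; ring

lemma derivB0 : deriv fB 0 = 0 := by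
  rw [derivB]; simp [fB', fa, fb]

lemma hdA' : HasDerivAt fA'
    (I * (I * cexp (I * ((0:ℝ):ℂ))) -
      ((I * (I * cexp (I * ((0:ℝ):ℂ))) + -I * (-I * cexp (-I * ((0:ℝ):ℂ)))) / 2 * (1 + cexp (2 * I * ((0:ℝ):ℂ))) +
            (I * cexp (I * ((0:ℝ):ℂ)) + -I * cexp (-I * ((0:ℝ):ℂ))) / 2 * (2 * I * cexp (2 * I * ((0:ℝ):ℂ))) +
          ((I * fa 0 + -I * fb 0) / 2 * (2 * I * cexp (2 * I * ((0:ℝ):ℂ))) +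
            fT 0 * (2 * I * (2 * I * cexp (2 * I * ((0:ℝ):ℂ)))))) / 4) 0 := by
  have p2 := (((hd_exp I 0).const_mul I).add ((hd_exp (-I) 0).const_mul (-I))).div_const 2
  have p3 := p2.mul ((hd_exp (2*I) 0).const_add 1)
  have p4 := (hdT 0).mul ((hd_exp (2*I) 0).const_mul (2*I))
  exact ((hd_exp I 0).const_mul I).sub ((p3.add p4).div_const 4)

lemma hdB' : HasDerivAt fB'
    (-((I * (I * cexp (I * ((0:ℝ):ℂ))) + -I * (-I * cexp (-I * ((0:ℝ):ℂ)))) / 2 / 2)) 0 :=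
  (((((hd_exp I 0).const_mul I).add ((hd_exp (-I) 0).const_mul (-I))).div_const 2).div_const 2).neg

lemma iter2A : iteratedDeriv 2 fA 0 ≠ 0 := by
  rw [iteratedDeriv_succ, iteratedDeriv_one, derivA, hdA'.deriv]
  simp [fa, fb, fT, Complex.ext_iff]
  norm_num

lemma iter2B : iteratedDeriv 2 fB 0 ≠ 0 := by
  rw [iteratedDeriv_succ, iteratedDeriv_one, derivB, hdB'.deriv]
  simp [Complex.ext_iff]

/-- The two coordinate directions. -/
def v0 : Fin 2 → ℝ := ![1, 0]
def v1 : Fin 2 → ℝ := ![0, 1]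

lemma decomp (v : Fin 2 → ℝ) : v = v 0 • v0 + v 1 • v1 := by
  funext i; fin_cases i <;> simp [v0, v1]

/-- Master lemma: zero value, two vanishing directional derivatives, and one nonvanishing
second directional derivative give a zero of order exactly 2. -/
lemma master {q : (Fin 2 → ℝ) → ℂ} (hq : ContDiff ℝ 2 q) (h0 : q 0 = 0)
    (hA0 : deriv (fun s : ℝ => q (s • v0)) 0 = 0)
    (hB0 : deriv (fun s : ℝ => q (s • v1)) 0 = 0)
    (h2 : iteratedDeriv 2 (fun s : ℝ => q (s • v0)) 0 ≠ 0) :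
    HasZeroOfOrderExactly q 2 0 := by
  have hdir : ∀ v : Fin 2 → ℝ, fderiv ℝ q 0 v = 0 := by
    have key : ∀ v : Fin 2 → ℝ, deriv (fun s : ℝ => q (s • v)) 0 = fderiv ℝ q 0 v := by
      intro v
      have := dirDeriv hq v (i := 1) (by norm_num)
      rw [iteratedDeriv_one] at this
      rw [this, iteratedFDeriv_one_apply]
    intro v
    rw [decomp v, map_add, (fderiv ℝ q 0).map_smul, (fderiv ℝ q 0).map_smul,
      ← key v0, ← key v1, hA0, hB0]
    simp
  constructor
  · intro j hj
    interval_cases j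
    · apply ContinuousMultilinearMap.ext; intro m
      rw [iteratedFDeriv_zero_apply]
      simpa using h0
    · apply ContinuousMultilinearMap.ext; intro m
      rw [iteratedFDeriv_one_apply]
      simpa using hdir (m 0)
  · intro h
    apply h2
    rw [dirDeriv hq v0 (i := 2) le_rfl, h]
    simp

end Aux

/-- each of the four complementary wavelet masks `q_{C,μ}` of the 2-D
TWFPD built from the piecewise linear box spline has a zero of order exactly `2`
at the origin, i.e. exactly two vanishing moments. -/
theorem complementary_masks_two_vanishing_moments :
    HasZeroOfOrderExactly qC1 2 0 ∧
    HasZeroOfOrderExactly qC2 2 0 ∧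
    HasZeroOfOrderExactly qC3 2 0 ∧
    HasZeroOfOrderExactly qC4 2 0 := by
  have l10 : (fun s : ℝ => qC1 (s • v0)) = fA := by
    funext s; simp [qC1, boxSplineMask, fA, fT, fa, fb, fe, v0]; ring_nf; simp
  have l11 : (fun s : ℝ => qC1 (s • v1)) = fB := by
    funext s; simp [qC1, boxSplineMask, fB, fT, fa, fb, fe, v1]; ring
  have l20 : (fun s : ℝ => qC2 (s • v0)) = fB := by
    funext s; simp [qC2, boxSplineMask, fB, fT, fa, fb, fe, v0]; ring
  have l21 : (fun s : ℝ => qC2 (s • v1)) = fA := by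
    funext s; simp [qC2, boxSplineMask, fA, fT, fa, fb, fe, v1]; ring_nf; simp
  have l30 : (fun s : ℝ => qC3 (s • v0)) = fA := by
    funext s; simp [qC3, boxSplineMask, fA, fT, fa, fb, fe, v0]; ring_nf; simp
  have l31 : (fun s : ℝ => qC3 (s • v1)) = fA := by
    funext s; simp [qC3, boxSplineMask, fA, fT, fa, fb, fe, v1]; ring_nf; simp
  have l40 : (fun s : ℝ => qC4 (s • v0)) = fB := by
    funext s; simp [qC4, boxSplineMask, fB, fT, fa, fb, fe, v0]; ring
  have l41 : (fun s : ℝ => qC4 (s • v1)) = fB := by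
    funext s; simp [qC4, boxSplineMask, fB, fT, fa, fb, fe, v1]; ring
  refine ⟨master cd_q1 ?_ ?_ ?_ ?_, master cd_q2 ?_ ?_ ?_ ?_,
          master cd_q3 ?_ ?_ ?_ ?_, master cd_q4 ?_ ?_ ?_ ?_⟩
  · simp [qC1, boxSplineMask]; norm_num
  · rw [l10]; exact derivA0
  · rw [l11]; exact derivB0
  · rw [l10]; exact iter2A
  · simp [qC2, boxSplineMask]; norm_num
  · rw [l20]; exact derivB0
  · rw [l21]; exact derivA0
  · rw [l20]; exact iter2B
  · simp [qC3, boxSplineMask]; norm_num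
  · rw [l30]; exact derivA0
  · rw [l31]; exact derivA0
  · rw [l30]; exact iter2A
  · simp [qC4, boxSplineMask]; norm_num
  · rw [l40]; exact derivB0
  · rw [l41]; exact derivB0
  · rw [l40]; exact iter2B
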